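/- Let P = ⟨D,Γ,Δ⟩ be a planning problem in action language B with consistent action theory, let φ be a basic desire formula, and let S be an answer set of the program Π(P,n) ∪ Π(φ) ∪ Π_pref. Then holds(sat(φ),0) ∈ S if and only if the trajectory s0(S) a0 s1(S) ... a_{n−1} s_n(S) encoded by S (where occ(a_i,i) ∈ S and s_i(S) = {ℓ | holds(ℓ,i) ∈ S}) satisfies φ. -/

import Mathlib

/- # Action language B -/

/-- A fluent literal: a fluent or its negation. -/
inductive Lit (F : Type) where
  | pos : F → Lit F
  | neg : F → Lit F

namespace Lit
/-- The complement of a fluent literal. -/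
def compl {F : Type} : Lit F → Lit F
  | .pos f => .neg f
  | .neg f => .pos f
end Lit

/-- A set of fluent literals is consistent if it contains no fluent together with
its negation. -/
def ConsistentLits {F : Type} (s : Set (Lit F)) : Prop :=
  ∀ f : F, ¬ (Lit.pos f ∈ s ∧ Lit.neg f ∈ s)

/-- A set of fluent literals is complete if it contains each fluent or its negation. -/
def CompleteLits {F : Type} (s : Set (Lit F)) : Prop :=
  ∀ f : F, Lit.pos f ∈ s ∨ Lit.neg f ∈ s

/-- A static causal law `caused(prem, concl)`. -/
structure StaticLaw (F : Type) where
  prem : Set (Lit F)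
  concl : Lit F

/-- A dynamic causal law `causes(act, concl, prem)`. -/
structure DynamicLaw (F A : Type) where
  act : A
  concl : Lit F
  prem : Set (Lit F)

/-- An executability condition `executable(act, prem)`. -/
structure ExecLaw (F A : Type) where
  act : A
  prem : Set (Lit F)

/-- A domain in the action language B. -/
structure BDomain (F A : Type) where
  statics : Set (StaticLaw F)
  dynamics : Set (DynamicLaw F A)
  execs : Set (ExecLaw F A)

/-- `v` is closed under the set `K` of static causal laws. -/
def ClosedUnder {F : Type} (K : Set (StaticLaw F)) (v : Set (Lit F)) : Prop :=
  ∀ r ∈ K, r.prem ⊆ v → r.concl ∈ v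

/-- `IsCl K u v`: `v` is the least consistent set of literals containing `u`
and closed under `K`. -/
def IsCl {F : Type} (K : Set (StaticLaw F)) (u v : Set (Lit F)) : Prop :=
  u ⊆ v ∧ ConsistentLits v ∧ ClosedUnder K v ∧
    ∀ w, u ⊆ w → ConsistentLits w → ClosedUnder K w → v ⊆ w

/-- A state: a maximal (complete) consistent set of fluent literals closed under
the static causal laws. -/
def IsState {F A : Type} (D : BDomain F A) (s : Set (Lit F)) : Prop :=
  CompleteLits s ∧ ConsistentLits s ∧ ClosedUnder D.statics s

/-- Action `a` is executable in `s`. -/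
def Executable {F A : Type} (D : BDomain F A) (a : A) (s : Set (Lit F)) : Prop :=
  ∃ e ∈ D.execs, e.act = a ∧ e.prem ⊆ s

/-- The direct effects `e(a,s)` of action `a` in `s`. -/
def directEffects {F A : Type} (D : BDomain F A) (a : A) (s : Set (Lit F)) : Set (Lit F) :=
  { l | ∃ d ∈ D.dynamics, d.act = a ∧ d.concl = l ∧ d.prem ⊆ s }

/-- The transition function `Φ` of a domain. -/
def Phi {F A : Type} (D : BDomain F A) (a : A) (s : Set (Lit F)) : Set (Set (Lit F)) :=
  { s' | Executable D a s ∧ IsState D s' ∧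
      IsCl D.statics (directEffects D a s ∪ (s ∩ s')) s' }

/-- A planning problem `⟨D, Γ, Δ⟩`; `init` is the set of literals `f` with
`initially(f) ∈ Γ`, and `goal` is `Δ`. -/
structure PlanningProblem (F A : Type) where
  dom : BDomain F A
  init : Set (Lit F)
  goal : Set (Lit F)

/-- The action theory `(D,Γ)` is consistent: `Φ(a,s) ≠ ∅` whenever `a` is executable
in state `s`, and the initial state is a state. -/
def ConsistentTheory {F A : Type} (P : PlanningProblem F A) : Prop :=
  (∀ (a : A) (s : Set (Lit F)), IsState P.dom s → Executable P.dom a s →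
      (Phi P.dom a s).Nonempty) ∧
  IsState P.dom P.init

/-- `s0 a0 s1 ... a_{n-1} s_n` is a trajectory. -/
def IsTrajectory {F A : Type} (D : BDomain F A) (n : ℕ)
    (ss : ℕ → Set (Lit F)) (acts : ℕ → A) : Prop :=
  IsState D (ss 0) ∧ ∀ i < n, ss (i + 1) ∈ Phi D (acts i) (ss i)

/- # Answer set programming -/

/-- A normal rule (`head = none` gives a constraint). -/
structure NRule (At : Type) where
  head : Option At
  pos : Set At
  neg : Set At

/-- A cardinality-1 choice rule `1{choices}1 ← pos, not neg`. -/
structure CRule (At : Type) where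
  choices : Set At
  pos : Set At
  neg : Set At

/-- A program: normal rules (and constraints) plus choice rules. -/
structure Program (At : Type) where
  normals : Set (NRule At)
  choiceRules : Set (CRule At)

/-- `X` is closed under the Gelfond–Lifschitz reduct of `P` w.r.t. `M`. The reduct
contains `h ← pos` for every normal rule with head `h` whose negative body is
disjoint from `M`, and `a ← pos` for every choice rule with negative body disjoint
from `M` and every chosen atom `a ∈ M`. -/
def ReductClosed {At : Type} (P : Program At) (M X : Set At) : Prop :=
  (∀ r ∈ P.normals, r.neg ∩ M = ∅ → r.pos ⊆ X → ∀ h, r.head = some h → h ∈ X) ∧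
  (∀ c ∈ P.choiceRules, c.neg ∩ M = ∅ → c.pos ⊆ X → ∀ a ∈ c.choices, a ∈ M → a ∈ X)

/-- `M` satisfies all constraints of `P`. -/
def SatConstraints {At : Type} (P : Program At) (M : Set At) : Prop :=
  ∀ r ∈ P.normals, r.head = none → ¬ (r.pos ⊆ M ∧ r.neg ∩ M = ∅)

/-- `M` satisfies the choice rules of `P`: when the body holds, exactly one chosen
atom is in `M`. -/
def SatChoices {At : Type} (P : Program At) (M : Set At) : Prop :=
  ∀ c ∈ P.choiceRules, c.pos ⊆ M → c.neg ∩ M = ∅ → ∃! a, a ∈ c.choices ∧ a ∈ M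

/-- `M` is an answer set (stable model) of `P`: it satisfies constraints and choice
rules and is the least model of the reduct of `P` w.r.t. `M`. -/
def AnswerSet {At : Type} (P : Program At) (M : Set At) : Prop :=
  SatConstraints P M ∧ SatChoices P M ∧ ReductClosed P M M ∧
    ∀ X, ReductClosed P M X → M ⊆ X


/- # Trajectories and basic desire formulas -/

/-- A (candidate) trajectory `s0 a0 s1 ... a_{len-1} s_len`. -/
structure PTraj (F A : Type) where
  len : ℕ
  states : ℕ → Set (Lit F)
  acts : ℕ → A

/-- The suffix `α[i] = s_i a_i ... a_{len-1} s_len`. -/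
def PTraj.suffix {F A : Type} (α : PTraj F A) (i : ℕ) : PTraj F A :=
  ⟨α.len - i, fun j => α.states (i + j), fun j => α.acts (i + j)⟩

/-- Fluent formulas: propositional formulas over fluent literals. -/
inductive FFormula (F : Type) where
  | lit : Lit F → FFormula F
  | conj : FFormula F → FFormula F → FFormula F
  | disj : FFormula F → FFormula F → FFormula F
  | fneg : FFormula F → FFormula F

/-- Satisfaction of a fluent formula in a set of fluent literals. -/
def FSat {F : Type} (s : Set (Lit F)) : FFormula F → Prop
  | .lit l => l ∈ s
  | .conj a b => FSat s a ∧ FSat s b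
  | .disj a b => FSat s a ∨ FSat s b
  | .fneg a => ¬ FSat s a

/-- Basic desire formulas. -/
inductive BDF (F A : Type) where
  | flit : Lit F → BDF F A
  | occA : A → BDF F A
  | goal : FFormula F → BDF F A
  | conj : BDF F A → BDF F A → BDF F A
  | disj : BDF F A → BDF F A → BDF F A
  | bneg : BDF F A → BDF F A
  | next : BDF F A → BDF F A
  | untl : BDF F A → BDF F A → BDF F A
  | always : BDF F A → BDF F A
  | eventually : BDF F A → BDF F A

/-- Satisfaction `α ⊨ ψ` of a basic desire formula by a trajectory. -/
def Sat {F A : Type} : BDF F A → PTraj F A → Prop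
  | .flit l, α => l ∈ α.states 0
  | .occA a, α => 0 < α.len ∧ α.acts 0 = a
  | .goal φ, α => FSat (α.states α.len) φ
  | .conj ψ1 ψ2, α => Sat ψ1 α ∧ Sat ψ2 α
  | .disj ψ1 ψ2, α => Sat ψ1 α ∨ Sat ψ2 α
  | .bneg ψ, α => ¬ Sat ψ α
  | .next ψ, α => 0 < α.len ∧ Sat ψ (α.suffix 1)
  | .untl ψ1 ψ2, α => ∃ i ≤ α.len, (∀ j < i, Sat ψ1 (α.suffix j)) ∧ Sat ψ2 (α.suffix i)
  | .always ψ, α => ∀ i < α.len, Sat ψ (α.suffix i)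
  | .eventually ψ, α => ∃ i ≤ α.len, Sat ψ (α.suffix i)

/-- The subformulas of a fluent formula. -/
def FFormula.subf {F : Type} : FFormula F → List (FFormula F)
  | .lit l => [.lit l]
  | .conj a b => .conj a b :: (a.subf ++ b.subf)
  | .disj a b => .disj a b :: (a.subf ++ b.subf)
  | .fneg a => .fneg a :: a.subf

/-- The subformulas of a basic desire formula. -/
def BDF.subf {F A : Type} : BDF F A → List (BDF F A)
  | .flit l => [.flit l]
  | .occA a => [.occA a]
  | .goal φ => [.goal φ]
  | .conj a b => .conj a b :: (a.subf ++ b.subf)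
  | .disj a b => .disj a b :: (a.subf ++ b.subf)
  | .bneg a => .bneg a :: a.subf
  | .next a => .next a :: a.subf
  | .untl a b => .untl a b :: (a.subf ++ b.subf)
  | .always a => .always a :: a.subf
  | .eventually a => .eventually a :: a.subf

/-- The fluent formulas occurring in goal preferences of a basic desire formula. -/
def BDF.fsubf {F A : Type} : BDF F A → List (FFormula F)
  | .flit _ => []
  | .occA _ => []
  | .goal φ => φ.subf
  | .conj a b => a.fsubf ++ b.fsubf
  | .disj a b => a.fsubf ++ b.fsubf
  | .bneg a => a.fsubf
  | .next a => a.fsubf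
  | .untl a b => a.fsubf ++ b.fsubf
  | .always a => a.fsubf
  | .eventually a => a.fsubf

/- # The encoding Π(P,n) ∪ Π(φ) ∪ Π_pref -/

/-- Atoms of the program `Π(P,n) ∪ Π(φ) ∪ Π_pref`: the planning atoms together with
the atoms `holds(sat(ψ),T)` for basic desire formulas `ψ` and `holds(sat(φ'),T)` for
fluent formulas `φ'`. -/
inductive PrefAtom (F A : Type) where
  | holds : Lit F → ℕ → PrefAtom F A
  | occ : A → ℕ → PrefAtom F A
  | possible : A → ℕ → PrefAtom F A
  | goal : PrefAtom F A
  | sat : BDF F A → ℕ → PrefAtom F A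
  | satF : FFormula F → ℕ → PrefAtom F A

/-- `holds(φ,t)`: the set of atoms `holds(l,t)` for `l ∈ φ`. -/
def holdsSet {F A : Type} (φ : Set (Lit F)) (t : ℕ) : Set (PrefAtom F A) :=
  { x | ∃ l ∈ φ, x = PrefAtom.holds l t }

/-- The rules of `Π_pref` (restricted to the subformulas of `φ`, whose syntax tree is
provided by the facts `Π(φ)`), defining `holds(sat(ψ),T)` so as to mirror the
satisfaction relation of basic desire formulas. -/
def prefRules {F A : Type} (φ : BDF F A) (n : ℕ) : Set (NRule (PrefAtom F A)) :=
  -- rules for fluent subformulas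
  { r | ∃ ψ ∈ φ.fsubf, ∃ t ≤ n, ∃ l : Lit F, ψ = FFormula.lit l ∧
      r = ⟨some (PrefAtom.satF ψ t), {PrefAtom.holds l t}, ∅⟩ } ∪
  { r | ∃ ψ ∈ φ.fsubf, ∃ t ≤ n, ∃ a b : FFormula F, ψ = FFormula.conj a b ∧
      r = ⟨some (PrefAtom.satF ψ t), {PrefAtom.satF a t, PrefAtom.satF b t}, ∅⟩ } ∪
  { r | ∃ ψ ∈ φ.fsubf, ∃ t ≤ n, ∃ a b : FFormula F, ψ = FFormula.disj a b ∧
      (r = ⟨some (PrefAtom.satF ψ t), {PrefAtom.satF a t}, ∅⟩ ∨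
       r = ⟨some (PrefAtom.satF ψ t), {PrefAtom.satF b t}, ∅⟩) } ∪
  { r | ∃ ψ ∈ φ.fsubf, ∃ t ≤ n, ∃ a : FFormula F, ψ = FFormula.fneg a ∧
      r = ⟨some (PrefAtom.satF ψ t), ∅, {PrefAtom.satF a t}⟩ } ∪
  -- holds(sat(ℓ),T) ← holds(ℓ,T)
  { r | ∃ ψ ∈ φ.subf, ∃ t ≤ n, ∃ l : Lit F, ψ = BDF.flit l ∧
      r = ⟨some (PrefAtom.sat ψ t), {PrefAtom.holds l t}, ∅⟩ } ∪
  -- holds(sat(occ(a)),T) ← occ(a,T)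
  { r | ∃ ψ ∈ φ.subf, ∃ t ≤ n, ∃ a : A, ψ = BDF.occA a ∧
      r = ⟨some (PrefAtom.sat ψ t), {PrefAtom.occ a t}, ∅⟩ } ∪
  -- holds(sat(goal(φ')),T) ← holds(sat(φ'),n)
  { r | ∃ ψ ∈ φ.subf, ∃ t ≤ n, ∃ g : FFormula F, ψ = BDF.goal g ∧
      r = ⟨some (PrefAtom.sat ψ t), {PrefAtom.satF g n}, ∅⟩ } ∪
  -- boolean connectives
  { r | ∃ ψ ∈ φ.subf, ∃ t ≤ n, ∃ a b : BDF F A, ψ = BDF.conj a b ∧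
      r = ⟨some (PrefAtom.sat ψ t), {PrefAtom.sat a t, PrefAtom.sat b t}, ∅⟩ } ∪
  { r | ∃ ψ ∈ φ.subf, ∃ t ≤ n, ∃ a b : BDF F A, ψ = BDF.disj a b ∧
      (r = ⟨some (PrefAtom.sat ψ t), {PrefAtom.sat a t}, ∅⟩ ∨
       r = ⟨some (PrefAtom.sat ψ t), {PrefAtom.sat b t}, ∅⟩) } ∪
  { r | ∃ ψ ∈ φ.subf, ∃ t ≤ n, ∃ a : BDF F A, ψ = BDF.bneg a ∧
      r = ⟨some (PrefAtom.sat ψ t), ∅, {PrefAtom.sat a t}⟩ } ∪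
  -- holds(sat(next(ψ)),T) ← holds(sat(ψ),T+1)
  { r | ∃ ψ ∈ φ.subf, ∃ t < n, ∃ a : BDF F A, ψ = BDF.next a ∧
      r = ⟨some (PrefAtom.sat ψ t), {PrefAtom.sat a (t + 1)}, ∅⟩ } ∪
  -- unfolding of until over steps t..n
  { r | ∃ ψ ∈ φ.subf, ∃ t ≤ n, ∃ a b : BDF F A, ψ = BDF.untl a b ∧
      ∃ i, t ≤ i ∧ i ≤ n ∧
      r = ⟨some (PrefAtom.sat ψ t),
           insert (PrefAtom.sat b i)
             { x | ∃ j, t ≤ j ∧ j < i ∧ x = PrefAtom.sat a j }, ∅⟩ } ∪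
  -- unfolding of always over steps t..n-1
  { r | ∃ ψ ∈ φ.subf, ∃ t ≤ n, ∃ a : BDF F A, ψ = BDF.always a ∧
      r = ⟨some (PrefAtom.sat ψ t),
           { x | ∃ j, t ≤ j ∧ j < n ∧ x = PrefAtom.sat a j }, ∅⟩ } ∪
  -- unfolding of eventually over steps t..n
  { r | ∃ ψ ∈ φ.subf, ∃ t ≤ n, ∃ a : BDF F A, ψ = BDF.eventually a ∧
      ∃ i, t ≤ i ∧ i ≤ n ∧
      r = ⟨some (PrefAtom.sat ψ t), {PrefAtom.sat a i}, ∅⟩ }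

/-- The program `Π(P,n) ∪ Π(φ) ∪ Π_pref`: the standard planning encoding with
horizon `n` together with the rules defining `holds(sat(ψ),T)` for the
subformulas `ψ` of `φ`. -/
def PiPrefProgram {F A : Type} (P : PlanningProblem F A) (n : ℕ) (φ : BDF F A) :
    Program (PrefAtom F A) where
  normals :=
    { r | ∃ l ∈ P.init, r = ⟨some (PrefAtom.holds l 0), ∅, ∅⟩ } ∪
    { r | ∃ e ∈ P.dom.execs, ∃ t ≤ n,
        r = ⟨some (PrefAtom.possible e.act t), holdsSet e.prem t, ∅⟩ } ∪
    { r | ∃ d ∈ P.dom.dynamics, ∃ t < n,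
        r = ⟨some (PrefAtom.holds d.concl (t + 1)),
             insert (PrefAtom.occ d.act t) (holdsSet d.prem t), ∅⟩ } ∪
    { r | ∃ sl ∈ P.dom.statics, ∃ t ≤ n,
        r = ⟨some (PrefAtom.holds sl.concl t), holdsSet sl.prem t, ∅⟩ } ∪
    { r | ∃ (a : A), ∃ t < n,
        r = ⟨none, {PrefAtom.occ a t}, {PrefAtom.possible a t}⟩ } ∪
    { r | ∃ (l : Lit F), ∃ t < n,
        r = ⟨some (PrefAtom.holds l (t + 1)), {PrefAtom.holds l t},
             {PrefAtom.holds l.compl (t + 1)}⟩ } ∪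
    { r | ∃ (f : F), ∃ t ≤ n,
        r = ⟨none, {PrefAtom.holds (Lit.pos f) t, PrefAtom.holds (Lit.neg f) t}, ∅⟩ } ∪
    { ⟨some PrefAtom.goal, holdsSet P.goal n, ∅⟩,
      ⟨none, ∅, {PrefAtom.goal}⟩ } ∪
    prefRules φ n
  choiceRules :=
    { c | ∃ t < n, c = ⟨{ x | ∃ a : A, x = PrefAtom.occ a t }, ∅, ∅⟩ }


/-!
Every atom of an answer set that no choice rule can pick is the head of a rule whose body the
answer set satisfies, and the answer set contains the head of every such rule. The rules of `Π_pref` with head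
`holds(sat(ψ),t)` are exactly the one-step unfolding of the semantics of `ψ` at `t` in terms of
the immediate subformulas of `ψ`, so induction on `ψ` identifies these atoms with satisfaction
by the suffixes of the encoded trajectory; the choice rule makes the `occ` atoms exactly the
chosen actions.
-/

def Supports {At : Type} (R : Set (NRule At)) (M : Set At) (x : At) : Prop :=
  ∃ r ∈ R, r.head = some x ∧ r.pos ⊆ M ∧ r.neg ∩ M = ∅

namespace AnswerSet

variable {At : Type} {P : Program At} {M : Set At}

theorem mem_of_supports (hM : AnswerSet P M) {x : At} (hx : Supports P.normals M x) :
    x ∈ M := by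
  obtain ⟨r, hr, hhead, hpos, hneg⟩ := hx
  exact hM.2.2.1.1 r hr hneg hpos x hhead

theorem supports_or_chosen (hM : AnswerSet P M) {x : At} (hx : x ∈ M) :
    Supports P.normals M x ∨
      ∃ c ∈ P.choiceRules, x ∈ c.choices ∧ c.pos ⊆ M ∧ c.neg ∩ M = ∅ := by
  by_contra hns
  obtain ⟨hnr, hnc⟩ := not_or.mp hns
  -- an unsupported atom could be removed from `M` without leaving the models of the reduct
  have hclosed : ReductClosed P M (M \ {x}) := by
    refine ⟨fun r hr hneg hpos h hh =>
        ⟨mem_of_supports hM ⟨r, hr, hh, hpos.trans Set.sdiff_subset, hneg⟩, ?_⟩,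
      fun c hc hneg hpos a ha haM => ⟨haM, ?_⟩⟩
    · rintro rfl
      exact hnr ⟨r, hr, hh, hpos.trans Set.sdiff_subset, hneg⟩
    · rintro rfl
      exact hnc ⟨c, hc, ha, hpos.trans Set.sdiff_subset, hneg⟩
  exact (hM.2.2.2 _ hclosed hx).2 rfl

theorem mem_iff_supports (hM : AnswerSet P M) {x : At}
    (hx : ∀ c ∈ P.choiceRules, x ∉ c.choices) : x ∈ M ↔ Supports P.normals M x := by
  refine ⟨fun hxM => ?_, mem_of_supports hM⟩
  obtain h | ⟨c, hc, hxc, -⟩ := supports_or_chosen hM hxM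
  · exact h
  · exact absurd hxc (hx c hc)

end AnswerSet

namespace FFormula

variable {F : Type}

@[simp] theorem mem_subf_self (g : FFormula F) : g ∈ g.subf := by
  cases g <;> simp [subf]

theorem mem_subf_trans {g h k : FFormula F} (hh : h ∈ g.subf) (hk : k ∈ h.subf) :
    k ∈ g.subf := by
  induction g <;> aesop (add norm simp subf)

end FFormula

namespace BDF

variable {F A : Type}

@[simp] theorem mem_subf_self (ψ : BDF F A) : ψ ∈ ψ.subf := by
  cases ψ <;> simp [subf]

theorem mem_subf_trans {φ ψ χ : BDF F A} (hψ : ψ ∈ φ.subf) (hχ : χ ∈ ψ.subf) :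
    χ ∈ φ.subf := by
  induction φ <;> aesop (add norm simp subf)

theorem mem_fsubf_trans {φ : BDF F A} {g h : FFormula F} (hg : g ∈ φ.fsubf)
    (hh : h ∈ g.subf) : h ∈ φ.fsubf := by
  induction φ <;> simp only [fsubf, List.mem_append, List.not_mem_nil] at hg ⊢ <;>
    first | exact FFormula.mem_subf_trans hg hh | tauto

theorem fsubf_subset_of_mem_subf {φ ψ : BDF F A} (hψ : ψ ∈ φ.subf) :
    ψ.fsubf ⊆ φ.fsubf := by
  intro g hg
  induction φ with
  | flit _ | occA _ | goal _ =>
    simp only [subf, List.mem_singleton] at hψ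
    subst hψ
    exact hg
  | conj a b iha ihb | disj a b iha ihb | untl a b iha ihb =>
    simp only [subf, List.mem_cons, List.mem_append] at hψ
    rcases hψ with rfl | hψ | hψ
    · exact hg
    · exact List.mem_append_left _ (iha hψ)
    · exact List.mem_append_right _ (ihb hψ)
  | bneg a ih | next a ih | always a ih | eventually a ih =>
    simp only [subf, List.mem_cons] at hψ
    rcases hψ with rfl | hψ
    · exact hg
    · exact ih hψ

theorem mem_fsubf_of_goal_mem_subf {φ : BDF F A} {g : FFormula F} (hg : goal g ∈ φ.subf) :
    g ∈ φ.fsubf :=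
  fsubf_subset_of_mem_subf hg (by simp [fsubf])

end BDF

namespace PTraj

variable {F A : Type} (α : PTraj F A)

@[simp] theorem suffix_len (i : ℕ) : (α.suffix i).len = α.len - i := rfl

@[simp] theorem suffix_zero : α.suffix 0 = α := by
  simp [suffix]

@[simp] theorem suffix_suffix (i j : ℕ) : (α.suffix i).suffix j = α.suffix (i + j) := by
  simp only [suffix, Nat.sub_sub, Nat.add_assoc]

end PTraj

section SuffixSemantics

variable {F A : Type} (α : PTraj F A) (t : ℕ)

theorem sat_flit_suffix (l : Lit F) : Sat (.flit l) (α.suffix t) ↔ l ∈ α.states t := by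
  simp [Sat, PTraj.suffix]

theorem sat_occA_suffix (a : A) :
    t ≤ α.len ∧ Sat (.occA a) (α.suffix t) ↔ t < α.len ∧ α.acts t = a := by
  simp only [Sat, PTraj.suffix, Nat.add_zero, Nat.sub_pos_iff_lt]
  grind

theorem sat_goal_suffix (g : FFormula F) :
    t ≤ α.len ∧ Sat (.goal g) (α.suffix t) ↔ t ≤ α.len ∧ FSat (α.states α.len) g :=
  and_congr_right fun ht => by simp [Sat, PTraj.suffix, Nat.add_sub_cancel' ht]

theorem sat_next_suffix (a : BDF F A) :
    t ≤ α.len ∧ Sat (.next a) (α.suffix t) ↔ t < α.len ∧ Sat a (α.suffix (t + 1)) := by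
  simp only [Sat, PTraj.suffix_len, PTraj.suffix_suffix, Nat.sub_pos_iff_lt]
  grind

theorem sat_untl_suffix (a b : BDF F A) :
    t ≤ α.len ∧ Sat (.untl a b) (α.suffix t) ↔
      ∃ i, t ≤ i ∧ i ≤ α.len ∧ Sat b (α.suffix i) ∧
        ∀ j, t ≤ j → j < i → Sat a (α.suffix j) := by
  simp only [Sat, PTraj.suffix_len, PTraj.suffix_suffix]
  constructor
  · rintro ⟨ht, i, hi, ha, hb⟩
    refine ⟨t + i, by omega, by omega, hb, fun j htj hji => ?_⟩
    simpa [Nat.add_sub_cancel' htj] using ha (j - t) (by omega)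
  · rintro ⟨i, hti, hin, hb, ha⟩
    refine ⟨by omega, i - t, by omega, fun j hj => ha _ (by omega) (by omega), ?_⟩
    rwa [Nat.add_sub_cancel' hti]

theorem sat_always_suffix (a : BDF F A) :
    t ≤ α.len ∧ Sat (.always a) (α.suffix t) ↔
      t ≤ α.len ∧ ∀ j, t ≤ j → j < α.len → Sat a (α.suffix j) := by
  simp only [Sat, PTraj.suffix_len, PTraj.suffix_suffix]
  refine and_congr_right fun _ =>
    ⟨fun h j htj hjn => ?_, fun h i hi => h _ (by omega) (by omega)⟩
  simpa [Nat.add_sub_cancel' htj] using h (j - t) (by omega)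

theorem sat_eventually_suffix (a : BDF F A) :
    t ≤ α.len ∧ Sat (.eventually a) (α.suffix t) ↔
      ∃ i, t ≤ i ∧ i ≤ α.len ∧ Sat a (α.suffix i) := by
  simp only [Sat, PTraj.suffix_len, PTraj.suffix_suffix]
  constructor
  · rintro ⟨ht, i, hi, ha⟩
    exact ⟨t + i, by omega, by omega, ha⟩
  · rintro ⟨i, hti, hin, ha⟩
    refine ⟨by omega, i - t, by omega, ?_⟩
    rwa [Nat.add_sub_cancel' hti]

end SuffixSemantics

section Encoding

variable {F A : Type}

def PrefAtom.IsSatAtom : PrefAtom F A → Prop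
  | .sat _ _ | .satF _ _ => True
  | _ => False

def satFBody (S : Set (PrefAtom F A)) (t : ℕ) : FFormula F → Prop
  | .lit l => PrefAtom.holds l t ∈ S
  | .conj a b => PrefAtom.satF a t ∈ S ∧ PrefAtom.satF b t ∈ S
  | .disj a b => PrefAtom.satF a t ∈ S ∨ PrefAtom.satF b t ∈ S
  | .fneg a => PrefAtom.satF a t ∉ S

def satBody (S : Set (PrefAtom F A)) (n t : ℕ) : BDF F A → Prop
  | .flit l => PrefAtom.holds l t ∈ S
  | .occA a => PrefAtom.occ a t ∈ S
  | .goal g => PrefAtom.satF g n ∈ S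
  | .conj a b => PrefAtom.sat a t ∈ S ∧ PrefAtom.sat b t ∈ S
  | .disj a b => PrefAtom.sat a t ∈ S ∨ PrefAtom.sat b t ∈ S
  | .bneg a => PrefAtom.sat a t ∉ S
  | .next a => t < n ∧ PrefAtom.sat a (t + 1) ∈ S
  | .untl a b => ∃ i, t ≤ i ∧ i ≤ n ∧ PrefAtom.sat b i ∈ S ∧
      ∀ j, t ≤ j → j < i → PrefAtom.sat a j ∈ S
  | .always a => ∀ j, t ≤ j → j < n → PrefAtom.sat a j ∈ S
  | .eventually a => ∃ i, t ≤ i ∧ i ≤ n ∧ PrefAtom.sat a i ∈ S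

variable {P : PlanningProblem F A} {n : ℕ} {φ : BDF F A} {S : Set (PrefAtom F A)}

theorem isSatAtom_of_mem_prefRules {r : NRule (PrefAtom F A)} (hr : r ∈ prefRules φ n)
    {x : PrefAtom F A} (hh : r.head = some x) : x.IsSatAtom := by
  simp only [prefRules, Set.mem_union, Set.mem_ofPred_eq] at hr
  rcases hr with (((((((((((((h | h) | h) | h) | h) | h) | h) | h) | h) | h) | h) | h) | h) | h) <;>
    aesop (add norm simp PrefAtom.IsSatAtom)

theorem PiPrefProgram.head_cases {r : NRule (PrefAtom F A)}
    (hr : r ∈ (PiPrefProgram P n φ).normals) {x : PrefAtom F A} (hh : r.head = some x) :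
    (r ∈ prefRules φ n ∧ x.IsSatAtom) ∨ (∃ l t, x = .holds l t) ∨
      (∃ a t, x = .possible a t) ∨ x = .goal := by
  rcases hr with hr | hr
  · simp only [Set.mem_union, Set.mem_ofPred_eq, Set.mem_insert_iff, Set.mem_singleton_iff] at hr
    rcases hr with ((((((⟨_, _, rfl⟩ | ⟨_, _, _, _, rfl⟩) | ⟨_, _, _, _, rfl⟩) |
      ⟨_, _, _, _, rfl⟩) | ⟨_, _, _, rfl⟩) | ⟨_, _, _, rfl⟩) | ⟨_, _, _, rfl⟩) | rfl | rfl <;>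
      cases hh <;> simp
  · exact .inl ⟨hr, isSatAtom_of_mem_prefRules hr hh⟩

theorem PiPrefProgram.not_mem_choices {c : CRule (PrefAtom F A)}
    (hc : c ∈ (PiPrefProgram P n φ).choiceRules) {x : PrefAtom F A} (hx : x.IsSatAtom) :
    x ∉ c.choices := by
  obtain ⟨t, -, rfl⟩ := hc
  rintro ⟨a, rfl⟩
  exact hx

theorem PiPrefProgram.supports_iff {x : PrefAtom F A} (hx : x.IsSatAtom) :
    Supports (PiPrefProgram P n φ).normals S x ↔ Supports (prefRules φ n) S x := by
  constructor
  · rintro ⟨r, hr, hh, hbody⟩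
    rcases head_cases hr hh with ⟨hr, -⟩ | ⟨_, _, rfl⟩ | ⟨_, _, rfl⟩ | rfl
    · exact ⟨r, hr, hh, hbody⟩
    all_goals exact hx.elim
  · rintro ⟨r, hr, hrest⟩
    exact ⟨r, Or.inr hr, hrest⟩

theorem supports_prefRules_satF_iff (g : FFormula F) (t : ℕ) :
    Supports (prefRules φ n) S (.satF g t) ↔ g ∈ φ.fsubf ∧ t ≤ n ∧ satFBody S t g := by
  simp only [Supports, prefRules, Set.mem_union, Set.mem_ofPred_eq, or_and_right, and_or_left,
    exists_or]
  cases g <;> simp [satFBody, Set.insert_subset_iff, and_assoc, and_or_left]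

theorem supports_prefRules_sat_iff (ψ : BDF F A) (t : ℕ) :
    Supports (prefRules φ n) S (.sat ψ t) ↔
      ψ ∈ φ.subf ∧ t ≤ n ∧ satBody S n t ψ := by
  simp only [Supports, prefRules, Set.mem_union, Set.mem_ofPred_eq, or_and_right, and_or_left,
    exists_or]
  cases ψ <;> simp [satBody, Set.subset_def, and_assoc, and_or_left] <;> grind

theorem mem_iff_supports_prefRules (hS : AnswerSet (PiPrefProgram P n φ) S) {x : PrefAtom F A}
    (hx : x.IsSatAtom) : x ∈ S ↔ Supports (prefRules φ n) S x := by
  rw [hS.mem_iff_supports fun _ hc => PiPrefProgram.not_mem_choices hc hx,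
    PiPrefProgram.supports_iff hx]

theorem satF_mem_iff_satFBody (hS : AnswerSet (PiPrefProgram P n φ) S) (g : FFormula F) (t : ℕ) :
    PrefAtom.satF g t ∈ S ↔ g ∈ φ.fsubf ∧ t ≤ n ∧ satFBody S t g :=
  (mem_iff_supports_prefRules hS (x := .satF g t) trivial).trans (supports_prefRules_satF_iff g t)

theorem sat_mem_iff_satBody (hS : AnswerSet (PiPrefProgram P n φ) S) (ψ : BDF F A) (t : ℕ) :
    PrefAtom.sat ψ t ∈ S ↔ ψ ∈ φ.subf ∧ t ≤ n ∧ satBody S n t ψ :=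
  (mem_iff_supports_prefRules hS (x := .sat ψ t) trivial).trans (supports_prefRules_sat_iff ψ t)

theorem occ_mem_iff (hS : AnswerSet (PiPrefProgram P n φ) S) {acts : ℕ → A}
    (hocc : ∀ i < n, PrefAtom.occ (acts i) i ∈ S) (a : A) (t : ℕ) :
    PrefAtom.occ a t ∈ S ↔ t < n ∧ acts t = a := by
  refine ⟨fun h => ?_, fun ⟨ht, hat⟩ => hat ▸ hocc t ht⟩
  rcases hS.supports_or_chosen h with ⟨r, hr, hh, -⟩ | ⟨c, hc, hac, -⟩
  · rcases PiPrefProgram.head_cases hr hh with ⟨-, h⟩ | ⟨_, _, h⟩ | ⟨_, _, h⟩ | h <;>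
      cases h
  · obtain ⟨t', ht', rfl⟩ := id hc
    obtain ⟨a', ha'⟩ := hac
    cases ha'
    obtain ⟨x, -, huniq⟩ := hS.2.1 _ hc (Set.empty_subset S) (Set.empty_inter S)
    exact ⟨ht', PrefAtom.occ.inj ((huniq _ ⟨⟨_, rfl⟩, hocc t ht'⟩).trans
      (huniq _ ⟨⟨_, rfl⟩, h⟩).symm) |>.1⟩

theorem satF_mem_iff (hS : AnswerSet (PiPrefProgram P n φ) S) {g : FFormula F}
    (hg : g ∈ φ.fsubf) (t : ℕ) :
    PrefAtom.satF g t ∈ S ↔ t ≤ n ∧ FSat {l | PrefAtom.holds l t ∈ S} g := by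
  induction g generalizing t with
  | lit l => simp [satF_mem_iff_satFBody hS, satFBody, FSat, hg]
  | conj a b iha ihb | disj a b iha ihb =>
    have ha : a ∈ φ.fsubf := BDF.mem_fsubf_trans hg (by simp [FFormula.subf])
    have hb : b ∈ φ.fsubf := BDF.mem_fsubf_trans hg (by simp [FFormula.subf])
    rw [satF_mem_iff_satFBody hS]
    simp only [satFBody, FSat, iha ha, ihb hb, hg, true_and]
    tauto
  | fneg a iha =>
    have ha : a ∈ φ.fsubf := BDF.mem_fsubf_trans hg (by simp [FFormula.subf])
    rw [satF_mem_iff_satFBody hS]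
    simp only [satFBody, FSat, iha ha, hg, true_and]
    tauto

abbrev encodedTraj (n : ℕ) (S : Set (PrefAtom F A)) (acts : ℕ → A) : PTraj F A :=
  ⟨n, fun i => {l | PrefAtom.holds l i ∈ S}, acts⟩

theorem sat_mem_iff (hS : AnswerSet (PiPrefProgram P n φ) S) {acts : ℕ → A}
    (hocc : ∀ i < n, PrefAtom.occ (acts i) i ∈ S) {ψ : BDF F A} (hψ : ψ ∈ φ.subf)
    (t : ℕ) :
    PrefAtom.sat ψ t ∈ S ↔ t ≤ n ∧ Sat ψ ((encodedTraj n S acts).suffix t) := by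
  induction ψ generalizing t with
  | flit l => simp [sat_mem_iff_satBody hS, satBody, sat_flit_suffix, hψ]
  | occA a =>
    rw [sat_mem_iff_satBody hS, sat_occA_suffix (encodedTraj n S acts)]
    simp only [satBody, occ_mem_iff hS hocc, hψ, true_and]
    grind
  | goal g =>
    rw [sat_mem_iff_satBody hS, sat_goal_suffix (encodedTraj n S acts)]
    simp [satBody, satF_mem_iff hS (BDF.mem_fsubf_of_goal_mem_subf hψ), hψ]
  | conj a b iha ihb | disj a b iha ihb =>
    have ha : a ∈ φ.subf := BDF.mem_subf_trans hψ (by simp [BDF.subf])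
    have hb : b ∈ φ.subf := BDF.mem_subf_trans hψ (by simp [BDF.subf])
    rw [sat_mem_iff_satBody hS]
    simp only [satBody, Sat, iha ha, ihb hb, hψ, true_and]
    tauto
  | untl a b iha ihb =>
    have ha : a ∈ φ.subf := BDF.mem_subf_trans hψ (by simp [BDF.subf])
    have hb : b ∈ φ.subf := BDF.mem_subf_trans hψ (by simp [BDF.subf])
    rw [sat_mem_iff_satBody hS, sat_untl_suffix (encodedTraj n S acts)]
    simp only [satBody, iha ha, ihb hb, hψ, true_and]
    grind
  | bneg a iha =>
    have ha : a ∈ φ.subf := BDF.mem_subf_trans hψ (by simp [BDF.subf])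
    rw [sat_mem_iff_satBody hS]
    simp only [satBody, Sat, iha ha, hψ, true_and]
    tauto
  | next a iha | always a iha | eventually a iha =>
    have ha : a ∈ φ.subf := BDF.mem_subf_trans hψ (by simp [BDF.subf])
    first
    | rw [sat_mem_iff_satBody hS, sat_next_suffix (encodedTraj n S acts)]
    | rw [sat_mem_iff_satBody hS, sat_always_suffix (encodedTraj n S acts)]
    | rw [sat_mem_iff_satBody hS, sat_eventually_suffix (encodedTraj n S acts)]
    simp only [satBody, iha ha, hψ, true_and]
    grind

end Encoding

theorem sat_encoding_correctness_general {F A : Type}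
    (P : PlanningProblem F A) (n : ℕ)
    (φ : BDF F A) (S : Set (PrefAtom F A))
    (hS : AnswerSet (PiPrefProgram P n φ) S)
    (acts : ℕ → A) (hocc : ∀ i < n, PrefAtom.occ (acts i) i ∈ S) :
    PrefAtom.sat φ 0 ∈ S ↔
      Sat φ ⟨n, fun i => { l | PrefAtom.holds l i ∈ S }, acts⟩ := by
  simpa using sat_mem_iff hS hocc (BDF.mem_subf_self φ) 0

/-- **Correctness of the preference encoding**: for an answer set `S` of
`Π(P,n) ∪ Π(φ) ∪ Π_pref`, `holds(sat(φ),0) ∈ S` iff the trajectory encoded by `S`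
satisfies the basic desire formula `φ`. -/
theorem sat_encoding_correctness {F A : Type}
    (P : PlanningProblem F A) (n : ℕ) (hcons : ConsistentTheory P)
    (φ : BDF F A) (S : Set (PrefAtom F A))
    (hS : AnswerSet (PiPrefProgram P n φ) S)
    (acts : ℕ → A) (hocc : ∀ i < n, PrefAtom.occ (acts i) i ∈ S) :
    PrefAtom.sat φ 0 ∈ S ↔
      Sat φ ⟨n, fun i => { l | PrefAtom.holds l i ∈ S }, acts⟩ :=
  sat_encoding_correctness_general P n φ S hS acts hocc
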